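/- Let χ > 0. For every ε > 0 there exists C > 0 such that for all t ≥ 0, the function f(t) = 8πχ(-log(√(t² + 8πχ) − t) + t/(√(t² + 8πχ) − t)) satisfies f(t) ≤ (2+ε)t² + C. (Note √(t²+8πχ) − t > 0 for all t ∈ ℝ.) -/

import Mathlib

/-!
With `a = 8πχ` and `s = √(t² + a)` we have `(s - t)(s + t) = a`, so
`a (-log (s - t) + t / (s - t)) = a log (s + t) - a log a + t s + t²`.
AM-GM gives `t s ≤ t² + a / 2`, and `log (s + t) ≤ log 2 + ½ log (t² + a)` is absorbed into
`ε t²` by the tangent-line bound `log x ≤ x / c + log c - 1` with `c = a / (2ε)`.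
-/

open Real

lemma Real.log_le_div_add_log_sub_one {x c : ℝ} (hx : 0 < x) (hc : 0 < c) :
    log x ≤ x / c + log c - 1 := by
  have h := log_le_sub_one_of_pos (div_pos hx hc)
  rw [log_div hx.ne' hc.ne'] at h
  linarith

section SqrtSqAdd

variable {a : ℝ}

lemma abs_lt_sqrt_sq_add (ha : 0 < a) (t : ℝ) : |t| < √(t ^ 2 + a) := by
  rw [← sqrt_sq_eq_abs]
  exact sqrt_lt_sqrt (sq_nonneg t) (lt_add_of_pos_right _ ha)

lemma sqrt_sq_add_sub_pos (ha : 0 < a) (t : ℝ) : 0 < √(t ^ 2 + a) - t := by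
  linarith [le_abs_self t, abs_lt_sqrt_sq_add ha t]

lemma sqrt_sq_add_add_pos (ha : 0 < a) (t : ℝ) : 0 < √(t ^ 2 + a) + t := by
  linarith [neg_le_abs t, abs_lt_sqrt_sq_add ha t]

lemma sqrt_sq_add_sub_mul_add (ha : 0 ≤ a) (t : ℝ) :
    (√(t ^ 2 + a) - t) * (√(t ^ 2 + a) + t) = a := by
  linear_combination sq_sqrt (add_nonneg (sq_nonneg t) ha)

lemma mul_neg_log_add_div_eq (ha : 0 < a) (t : ℝ) :
    a * (-log (√(t ^ 2 + a) - t) + t / (√(t ^ 2 + a) - t)) =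
      a * log (√(t ^ 2 + a) + t) - a * log a + t * √(t ^ 2 + a) + t ^ 2 := by
  have hsub := sqrt_sq_add_sub_pos ha t
  have hadd := sqrt_sq_add_add_pos ha t
  have hprod := sqrt_sq_add_sub_mul_add ha.le t
  set s := √(t ^ 2 + a)
  have hlog : log a = log (s - t) + log (s + t) := by
    rw [← log_mul hsub.ne' hadd.ne', hprod]
  have hdiv : a * (t / (s - t)) = t * (s + t) := by
    rw [div_eq_mul_inv, ← hprod]
    field_simp
  linear_combination a * hlog + hdiv

lemma mul_sqrt_sq_add_le (ha : 0 ≤ a) (t : ℝ) : t * √(t ^ 2 + a) ≤ t ^ 2 + a / 2 := by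
  nlinarith [sq_sqrt (add_nonneg (sq_nonneg t) ha), sq_nonneg (t - √(t ^ 2 + a))]

lemma log_sqrt_sq_add_add_le (ha : 0 < a) (t : ℝ) :
    log (√(t ^ 2 + a) + t) ≤ log 2 + log (t ^ 2 + a) / 2 := by
  have hs : 0 < √(t ^ 2 + a) := (abs_nonneg t).trans_lt (abs_lt_sqrt_sq_add ha t)
  calc log (√(t ^ 2 + a) + t) ≤ log (2 * √(t ^ 2 + a)) :=
        log_le_log (sqrt_sq_add_add_pos ha t) (by linarith [le_abs_self t, abs_lt_sqrt_sq_add ha t])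
    _ = log 2 + log (t ^ 2 + a) / 2 := by
        rw [log_mul two_ne_zero hs.ne', log_sqrt (by positivity)]

lemma exists_mul_log_sqrt_sq_add_add_le (ha : 0 < a) {ε : ℝ} (hε : 0 < ε) :
    ∃ K, ∀ t, a * log (√(t ^ 2 + a) + t) ≤ ε * t ^ 2 + K := by
  set c := a / (2 * ε)
  have hc : 0 < c := by positivity
  refine ⟨a * log 2 + ε * a + a / 2 * (log c - 1), fun t => ?_⟩
  have htc := log_le_div_add_log_sub_one (by positivity : 0 < t ^ 2 + a) hc
  have hac : a / 2 * ((t ^ 2 + a) / c) = ε * (t ^ 2 + a) := by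
    simp only [c]
    field_simp
  calc a * log (√(t ^ 2 + a) + t) ≤ a * (log 2 + log (t ^ 2 + a) / 2) :=
        mul_le_mul_of_nonneg_left (log_sqrt_sq_add_add_le ha t) ha.le
    _ ≤ a * log 2 + a / 2 * ((t ^ 2 + a) / c + log c - 1) := by
        linarith [mul_le_mul_of_nonneg_left htc (half_pos ha).le]
    _ = ε * t ^ 2 + (a * log 2 + ε * a + a / 2 * (log c - 1)) := by
        rw [mul_sub, mul_add, hac]; ring

lemma exists_mul_neg_log_add_div_le (ha : 0 < a) {ε : ℝ} (hε : 0 < ε) :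
    ∃ C, 0 < C ∧ ∀ t, a * (-log (√(t ^ 2 + a) - t) + t / (√(t ^ 2 + a) - t)) ≤
      (2 + ε) * t ^ 2 + C := by
  obtain ⟨K, hK⟩ := exists_mul_log_sqrt_sq_add_add_le ha hε
  refine ⟨max (K - a * log a + a / 2) 1, by positivity, fun t => ?_⟩
  rw [mul_neg_log_add_div_eq ha t]
  linarith [hK t, mul_sqrt_sq_add_le ha.le t, le_max_left (K - a * log a + a / 2) 1]

end SqrtSqAdd

theorem stmt1 (χ : ℝ) (hχ : 0 < χ) (ε : ℝ) (hε : 0 < ε) :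
    ∃ C : ℝ, 0 < C ∧ ∀ t : ℝ, 0 ≤ t →
      8 * Real.pi * χ *
          (-Real.log (Real.sqrt (t ^ 2 + 8 * Real.pi * χ) - t) +
            t / (Real.sqrt (t ^ 2 + 8 * Real.pi * χ) - t)) ≤
        (2 + ε) * t ^ 2 + C := by
  obtain ⟨C, hC, hf⟩ := exists_mul_neg_log_add_div_le (by positivity : 0 < 8 * π * χ) hε
  exact ⟨C, hC, fun t _ => hf t⟩
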